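/- arXiv:1512.03491 — 2 statements merged into one kernel-verified Lean document; each statement's English description precedes it below -/
import Mathlib

section
/- Let u, h be smooth vector fields and p a smooth function on ℝ³ satisfying (u·∇)u + ∇p = (h·∇)h + Δu and ((u·∇)h − (h·∇)u = Δh) with div u = div h = 0. Then the total head pressure Φ = ½(|u|² + |h|²) + p satisfies (u·∇)Φ − (h·∇)(u·h) − ΔΦ = −|curl u|² − (2Σᵢ(∂ᵢhᵢ)² + (∂₂h₃+∂₃h₂)² + (∂₃h₁+∂₁h₃)² + (∂₁h₂+∂₂h₁)²) ≤ 0. -/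
/-- Partial derivative of `f : ℝ³ → ℝ` in the `i`-th coordinate direction. -/
noncomputable def pd (i : Fin 3) (f : EuclideanSpace ℝ (Fin 3) → ℝ)
    (x : EuclideanSpace ℝ (Fin 3)) : ℝ :=
  fderiv ℝ f x (EuclideanSpace.single i 1)

/-- Laplacian of `f : ℝ³ → ℝ`. -/
noncomputable def lap (f : EuclideanSpace ℝ (Fin 3) → ℝ)
    (x : EuclideanSpace ℝ (Fin 3)) : ℝ :=
  ∑ j, pd j (fun y => pd j f y) x

namespace MHDaux

variable {f g a b c d e r : EuclideanSpace ℝ (Fin 3) → ℝ}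
  {x : EuclideanSpace ℝ (Fin 3)} {i j : Fin 3}

lemma pd_contDiff (hf : ContDiff ℝ (⊤ : ℕ∞) f) (i : Fin 3) : ContDiff ℝ (⊤ : ℕ∞) (pd i f) := by
  unfold pd
  exact (hf.fderiv_right (by simp)).clm_apply contDiff_const

lemma pd_add (hf : DifferentiableAt ℝ f x) (hg : DifferentiableAt ℝ g x) :
    pd i (fun y => f y + g y) x = pd i f x + pd i g x := by
  simp [pd, fderiv_fun_add hf hg]

lemma pd_mul (hf : DifferentiableAt ℝ f x) (hg : DifferentiableAt ℝ g x) :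
    pd i (fun y => f y * g y) x = f x * pd i g x + g x * pd i f x := by
  simp [pd, fderiv_fun_mul hf hg]

lemma pd_const_mul (c : ℝ) (hf : DifferentiableAt ℝ f x) :
    pd i (fun y => c * f y) x = c * pd i f x := by
  simp [pd, fderiv_const_mul hf]

lemma pd_sq (hf : DifferentiableAt ℝ f x) :
    pd i (fun y => f y ^ 2) x = 2 * f x * pd i f x := by
  have : (fun y => f y ^ 2) = fun y => f y * f y := by funext y; ring
  rw [this, pd_mul hf hf]; ring

lemma pd_zero : pd i (fun _ => (0 : ℝ)) x = 0 := by
  simp [pd]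

lemma pd_sum3 (ha : DifferentiableAt ℝ a x) (hb : DifferentiableAt ℝ b x)
    (hc : DifferentiableAt ℝ c x) :
    pd i (fun y => a y + b y + c y) x = pd i a x + pd i b x + pd i c x := by
  rw [pd_add (by fun_prop) hc, pd_add ha hb]

lemma pd_dot3 (ha : DifferentiableAt ℝ a x) (hb : DifferentiableAt ℝ b x)
    (hc : DifferentiableAt ℝ c x) (hd : DifferentiableAt ℝ d x)
    (he : DifferentiableAt ℝ e x) (hr : DifferentiableAt ℝ r x) :
    pd i (fun y => a y * b y + c y * d y + e y * r y) x
      = a x * pd i b x + b x * pd i a x + c x * pd i d x + d x * pd i c x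
        + e x * pd i r x + r x * pd i e x := by
  rw [pd_add (by fun_prop) (by fun_prop), pd_add (by fun_prop) (by fun_prop),
    pd_mul ha hb, pd_mul hc hd, pd_mul he hr]
  ring

lemma pd_comm (hf : ContDiff ℝ (⊤ : ℕ∞) f) :
    pd i (pd j f) x = pd j (pd i f) x := by
  have hd : DifferentiableAt ℝ (fderiv ℝ f) x :=
    ((hf.fderiv_right (m := (⊤ : ℕ∞)) (by simp)).differentiable (by simp)).differentiableAt
  have key : ∀ (a b : Fin 3), pd a (pd b f) x
      = fderiv ℝ (fderiv ℝ f) x (EuclideanSpace.single a 1) (EuclideanSpace.single b 1) := by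
    intro a b
    have : pd b f = fun y => (fderiv ℝ f y) (EuclideanSpace.single b 1) := rfl
    rw [pd, this, fderiv_clm_apply hd (differentiableAt_const _)]
    simp
  rw [key, key]
  exact (hf.contDiffAt.isSymmSndFDerivAt (by rw [minSmoothness_of_isRCLikeNormedField]; exact WithTop.coe_le_coe.mpr (le_top : (2 : ℕ∞) ≤ ⊤))) _ _

lemma pd_comm_fun (hf : ContDiff ℝ (⊤ : ℕ∞) f) (i j : Fin 3) :
    pd i (pd j f) = pd j (pd i f) :=
  funext fun _ => pd_comm hf

/-- swap a first derivative past two equal derivatives -/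
lemma swap3 (hf : ContDiff ℝ (⊤ : ℕ∞) f) (i j : Fin 3) (x) :
    pd i (pd j (pd j f)) x = pd j (pd j (pd i f)) x := by
  rw [pd_comm (pd_contDiff hf j), pd_comm_fun hf i j]

end MHDaux

open MHDaux in
/-- For a smooth solution `(u, h, p)` of the steady MHD system, the total head
pressure `Φ = ½(|u|² + |h|²) + p` satisfies
`(u·∇)Φ − (h·∇)(u·h) − ΔΦ = −|curl u|² − (2Σᵢ(∂ᵢhᵢ)² + Σ_{i<j}(∂ᵢhⱼ+∂ⱼhᵢ)²) ≤ 0`. -/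
theorem stmt16 (u h : Fin 3 → EuclideanSpace ℝ (Fin 3) → ℝ)
    (p : EuclideanSpace ℝ (Fin 3) → ℝ)
    (hu : ∀ i, ContDiff ℝ (⊤ : ℕ∞) (u i)) (hh : ∀ i, ContDiff ℝ (⊤ : ℕ∞) (h i))
    (hp : ContDiff ℝ (⊤ : ℕ∞) p)
    (hmom : ∀ (i : Fin 3) (x : EuclideanSpace ℝ (Fin 3)),
      (∑ j, u j x * pd j (u i) x) + pd i p x
        = (∑ j, h j x * pd j (h i) x) + lap (u i) x)
    (hind : ∀ (i : Fin 3) (x : EuclideanSpace ℝ (Fin 3)),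
      (∑ j, u j x * pd j (h i) x) - (∑ j, h j x * pd j (u i) x) = lap (h i) x)
    (hdivu : ∀ x : EuclideanSpace ℝ (Fin 3), ∑ i, pd i (u i) x = 0)
    (hdivh : ∀ x : EuclideanSpace ℝ (Fin 3), ∑ i, pd i (h i) x = 0) :
    ∀ x : EuclideanSpace ℝ (Fin 3),
      ((∑ j, u j x * pd j (fun y => (1 / 2) * ((∑ i, (u i y) ^ 2) + ∑ i, (h i y) ^ 2) + p y) x)
          - (∑ j, h j x * pd j (fun y => ∑ i, u i y * h i y) x)
          - lap (fun y => (1 / 2) * ((∑ i, (u i y) ^ 2) + ∑ i, (h i y) ^ 2) + p y) x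
        = -((pd 1 (u 2) x - pd 2 (u 1) x) ^ 2 + (pd 2 (u 0) x - pd 0 (u 2) x) ^ 2
              + (pd 0 (u 1) x - pd 1 (u 0) x) ^ 2)
          - (2 * (∑ i, (pd i (h i) x) ^ 2) + (pd 1 (h 2) x + pd 2 (h 1) x) ^ 2
              + (pd 2 (h 0) x + pd 0 (h 2) x) ^ 2 + (pd 0 (h 1) x + pd 1 (h 0) x) ^ 2)) ∧
      ((∑ j, u j x * pd j (fun y => (1 / 2) * ((∑ i, (u i y) ^ 2) + ∑ i, (h i y) ^ 2) + p y) x)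
          - (∑ j, h j x * pd j (fun y => ∑ i, u i y * h i y) x)
          - lap (fun y => (1 / 2) * ((∑ i, (u i y) ^ 2) + ∑ i, (h i y) ^ 2) + p y) x ≤ 0) := by
  have hu' : ∀ i, Differentiable ℝ (u i) := fun i => (hu i).differentiable (by simp)
  have hh' : ∀ i, Differentiable ℝ (h i) := fun i => (hh i).differentiable (by simp)
  have hp' : Differentiable ℝ p := hp.differentiable (by simp)
  have hu2' : ∀ (j : Fin 3) i, Differentiable ℝ (pd j (u i)) :=
    fun j i => ((pd_contDiff (hu i) j).differentiable (by simp))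
  have hh2' : ∀ (j : Fin 3) i, Differentiable ℝ (pd j (h i)) :=
    fun j i => ((pd_contDiff (hh i) j).differentiable (by simp))
  have hp2' : ∀ j : Fin 3, Differentiable ℝ (pd j p) :=
    fun j => ((pd_contDiff hp j).differentiable (by simp))
  have hu3' : ∀ (j k : Fin 3) i, Differentiable ℝ (pd k (pd j (u i))) :=
    fun j k i => ((pd_contDiff (pd_contDiff (hu i) j) k).differentiable (by simp))
  have hh3' : ∀ (j k : Fin 3) i, Differentiable ℝ (pd k (pd j (h i))) :=
    fun j k i => ((pd_contDiff (pd_contDiff (hh i) j) k).differentiable (by simp))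
  have hdzu : (fun z => pd 0 (u 0) z + pd 1 (u 1) z + pd 2 (u 2) z)
      = fun _ : EuclideanSpace ℝ (Fin 3) => (0 : ℝ) := by
    funext z; simpa [Fin.sum_univ_three] using hdivu z
  have hdzh : (fun z => pd 0 (h 0) z + pd 1 (h 1) z + pd 2 (h 2) z)
      = fun _ : EuclideanSpace ℝ (Fin 3) => (0 : ℝ) := by
    funext z; simpa [Fin.sum_univ_three] using hdivh z
  have lapfun : ∀ i : Fin 3, lap (u i)
      = fun z => pd 0 (pd 0 (u i)) z + pd 1 (pd 1 (u i)) z + pd 2 (pd 2 (u i)) z := by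
    intro i; funext z; simp [lap, Fin.sum_univ_three]
  have hlapu : ∀ i : Fin 3, Differentiable ℝ (lap (u i)) := by
    intro i; rw [lapfun i]; fun_prop
  have G : ∀ (j : Fin 3) (y : EuclideanSpace ℝ (Fin 3)),
      pd j (fun y => 1 / 2 * ((u 0 y ^ 2 + u 1 y ^ 2 + u 2 y ^ 2)
          + (h 0 y ^ 2 + h 1 y ^ 2 + h 2 y ^ 2)) + p y) y
        = u 0 y * pd j (u 0) y + u 1 y * pd j (u 1) y + u 2 y * pd j (u 2) y
          + (h 0 y * pd j (h 0) y + h 1 y * pd j (h 1) y + h 2 y * pd j (h 2) y)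
          + pd j p y := by
    intro j y
    rw [pd_add (by fun_prop) (hp' y), pd_const_mul _ (by fun_prop),
      pd_add (by fun_prop) (by fun_prop),
      pd_add (by fun_prop) (by fun_prop), pd_add (by fun_prop) (by fun_prop),
      pd_add (by fun_prop) (by fun_prop), pd_add (by fun_prop) (by fun_prop),
      pd_sq (hu' 0 y), pd_sq (hu' 1 y), pd_sq (hu' 2 y),
      pd_sq (hh' 0 y), pd_sq (hh' 1 y), pd_sq (hh' 2 y)]
    ring
  suffices key : ∀ x : EuclideanSpace ℝ (Fin 3),
      ((∑ j, u j x * pd j (fun y => (1 / 2) * ((∑ i, (u i y) ^ 2) + ∑ i, (h i y) ^ 2) + p y) x)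
          - (∑ j, h j x * pd j (fun y => ∑ i, u i y * h i y) x)
          - lap (fun y => (1 / 2) * ((∑ i, (u i y) ^ 2) + ∑ i, (h i y) ^ 2) + p y) x
        = -((pd 1 (u 2) x - pd 2 (u 1) x) ^ 2 + (pd 2 (u 0) x - pd 0 (u 2) x) ^ 2
              + (pd 0 (u 1) x - pd 1 (u 0) x) ^ 2)
          - (2 * (∑ i, (pd i (h i) x) ^ 2) + (pd 1 (h 2) x + pd 2 (h 1) x) ^ 2
              + (pd 2 (h 0) x + pd 0 (h 2) x) ^ 2 + (pd 0 (h 1) x + pd 1 (h 0) x) ^ 2)) by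
    intro x
    refine ⟨key x, ?_⟩
    rw [key x]
    simp only [Fin.sum_univ_three]
    nlinarith [sq_nonneg (pd 1 (u 2) x - pd 2 (u 1) x), sq_nonneg (pd 2 (u 0) x - pd 0 (u 2) x),
      sq_nonneg (pd 0 (u 1) x - pd 1 (u 0) x), sq_nonneg (pd 0 (h 0) x),
      sq_nonneg (pd 1 (h 1) x), sq_nonneg (pd 2 (h 2) x),
      sq_nonneg (pd 1 (h 2) x + pd 2 (h 1) x), sq_nonneg (pd 2 (h 0) x + pd 0 (h 2) x),
      sq_nonneg (pd 0 (h 1) x + pd 1 (h 0) x)]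
  intro x
  -- second-order divergence-free identities
  have dd_u : ∀ j : Fin 3,
      pd 0 (pd j (u 0)) x + pd 1 (pd j (u 1)) x + pd 2 (pd j (u 2)) x = 0 := by
    intro j
    have e1 : pd 0 (pd j (u 0)) x + pd 1 (pd j (u 1)) x + pd 2 (pd j (u 2)) x
        = pd j (pd 0 (u 0)) x + pd j (pd 1 (u 1)) x + pd j (pd 2 (u 2)) x := by
      rw [pd_comm (hu 0), pd_comm (hu 1), pd_comm (hu 2)]
    rw [e1, ← pd_sum3 (hu2' 0 0 x) (hu2' 1 1 x) (hu2' 2 2 x), hdzu, pd_zero]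
  have dd_h : ∀ j : Fin 3,
      pd 0 (pd j (h 0)) x + pd 1 (pd j (h 1)) x + pd 2 (pd j (h 2)) x = 0 := by
    intro j
    have e1 : pd 0 (pd j (h 0)) x + pd 1 (pd j (h 1)) x + pd 2 (pd j (h 2)) x
        = pd j (pd 0 (h 0)) x + pd j (pd 1 (h 1)) x + pd j (pd 2 (h 2)) x := by
      rw [pd_comm (hh 0), pd_comm (hh 1), pd_comm (hh 2)]
    rw [e1, ← pd_sum3 (hh2' 0 0 x) (hh2' 1 1 x) (hh2' 2 2 x), hdzh, pd_zero]
  -- third-order : divergence of the Laplacian of u vanishes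
  have step : ∀ j : Fin 3,
      pd j (pd j (pd 0 (u 0))) x + pd j (pd j (pd 1 (u 1))) x + pd j (pd j (pd 2 (u 2))) x
        = 0 := by
    intro j
    have e1 : (fun z => pd j (pd 0 (u 0)) z + pd j (pd 1 (u 1)) z + pd j (pd 2 (u 2)) z)
        = pd j (fun z => pd 0 (u 0) z + pd 1 (u 1) z + pd 2 (u 2) z) := by
      funext z
      exact (pd_sum3 (hu2' 0 0 z) (hu2' 1 1 z) (hu2' 2 2 z)).symm
    have e2 : pd j (fun z => pd 0 (u 0) z + pd 1 (u 1) z + pd 2 (u 2) z)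
        = fun _ => (0 : ℝ) := by
      rw [hdzu]; funext z; exact pd_zero
    rw [← pd_sum3 (hu3' 0 j 0 x) (hu3' 1 j 1 x) (hu3' 2 j 2 x), e1, e2, pd_zero]
  have tdiv : pd 0 (lap (u 0)) x + pd 1 (lap (u 1)) x + pd 2 (lap (u 2)) x = 0 := by
    rw [lapfun 0, lapfun 1, lapfun 2,
      pd_sum3 (hu3' 0 0 0 x) (hu3' 1 1 0 x) (hu3' 2 2 0 x),
      pd_sum3 (hu3' 0 0 1 x) (hu3' 1 1 1 x) (hu3' 2 2 1 x),
      pd_sum3 (hu3' 0 0 2 x) (hu3' 1 1 2 x) (hu3' 2 2 2 x),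
      swap3 (hu 0) 0 0 x, swap3 (hu 0) 0 1 x, swap3 (hu 0) 0 2 x,
      swap3 (hu 1) 1 0 x, swap3 (hu 1) 1 1 x, swap3 (hu 1) 1 2 x,
      swap3 (hu 2) 2 0 x, swap3 (hu 2) 2 1 x, swap3 (hu 2) 2 2 x]
    linarith [step 0, step 1, step 2]
  -- the Laplacian of the pressure
  have F : ∀ i : Fin 3,
      (fun z => u 0 z * pd 0 (u i) z + u 1 z * pd 1 (u i) z + u 2 z * pd 2 (u i) z
          + pd i p z)
        = fun z => h 0 z * pd 0 (h i) z + h 1 z * pd 1 (h i) z + h 2 z * pd 2 (h i) z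
          + lap (u i) z := by
    intro i; funext z
    simpa [Fin.sum_univ_three] using hmom i z
  have dFe : ∀ i : Fin 3,
      (pd i (u 0) x * pd 0 (u i) x + pd i (u 1) x * pd 1 (u i) x
          + pd i (u 2) x * pd 2 (u i) x)
        + (u 0 x * pd i (pd 0 (u i)) x + u 1 x * pd i (pd 1 (u i)) x
          + u 2 x * pd i (pd 2 (u i)) x)
        + pd i (pd i p) x
      = (pd i (h 0) x * pd 0 (h i) x + pd i (h 1) x * pd 1 (h i) x
          + pd i (h 2) x * pd 2 (h i) x)
        + (h 0 x * pd i (pd 0 (h i)) x + h 1 x * pd i (pd 1 (h i)) x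
          + h 2 x * pd i (pd 2 (h i)) x)
        + pd i (lap (u i)) x := by
    intro i
    have e : pd i (fun z => u 0 z * pd 0 (u i) z + u 1 z * pd 1 (u i) z
          + u 2 z * pd 2 (u i) z + pd i p z) x
        = pd i (fun z => h 0 z * pd 0 (h i) z + h 1 z * pd 1 (h i) z
          + h 2 z * pd 2 (h i) z + lap (u i) z) x := by rw [F i]
    rw [pd_add (by fun_prop) ((hp2' i) x), pd_add (by fun_prop) ((hlapu i) x),
      pd_dot3 (hu' 0 x) (hu2' 0 i x) (hu' 1 x) (hu2' 1 i x) (hu' 2 x) (hu2' 2 i x),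
      pd_dot3 (hh' 0 x) (hh2' 0 i x) (hh' 1 x) (hh2' 1 i x) (hh' 2 x) (hh2' 2 i x)] at e
    linarith [e]
  have lapp : lap p x = pd 0 (pd 0 p) x + pd 1 (pd 1 p) x + pd 2 (pd 2 p) x := by
    simp [lap, Fin.sum_univ_three]
  have Lpx : lap p x = (pd 0 (h 0) x * pd 0 (h 0) x + pd 0 (h 1) x * pd 1 (h 0) x
        + pd 0 (h 2) x * pd 2 (h 0) x + pd 1 (h 0) x * pd 0 (h 1) x
        + pd 1 (h 1) x * pd 1 (h 1) x + pd 1 (h 2) x * pd 2 (h 1) x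
        + pd 2 (h 0) x * pd 0 (h 2) x + pd 2 (h 1) x * pd 1 (h 2) x
        + pd 2 (h 2) x * pd 2 (h 2) x)
      - (pd 0 (u 0) x * pd 0 (u 0) x + pd 0 (u 1) x * pd 1 (u 0) x
        + pd 0 (u 2) x * pd 2 (u 0) x + pd 1 (u 0) x * pd 0 (u 1) x
        + pd 1 (u 1) x * pd 1 (u 1) x + pd 1 (u 2) x * pd 2 (u 1) x
        + pd 2 (u 0) x * pd 0 (u 2) x + pd 2 (u 1) x * pd 1 (u 2) x
        + pd 2 (u 2) x * pd 2 (u 2) x) := by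
    linear_combination dFe 0 + dFe 1 + dFe 2 + lapp
      - u 0 x * dd_u 0 - u 1 x * dd_u 1 - u 2 x * dd_u 2
      + h 0 x * dd_h 0 + h 1 x * dd_h 1 + h 2 x * dd_h 2 + tdiv
  -- Laplacian of the total head pressure
  have LPhi : lap (fun y => 1 / 2 * ((u 0 y ^ 2 + u 1 y ^ 2 + u 2 y ^ 2)
        + (h 0 y ^ 2 + h 1 y ^ 2 + h 2 y ^ 2)) + p y) x
      = ((pd 0 (u 0) x) ^ 2 + (pd 1 (u 0) x) ^ 2 + (pd 2 (u 0) x) ^ 2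
          + (pd 0 (u 1) x) ^ 2 + (pd 1 (u 1) x) ^ 2 + (pd 2 (u 1) x) ^ 2
          + (pd 0 (u 2) x) ^ 2 + (pd 1 (u 2) x) ^ 2 + (pd 2 (u 2) x) ^ 2)
        + ((pd 0 (h 0) x) ^ 2 + (pd 1 (h 0) x) ^ 2 + (pd 2 (h 0) x) ^ 2
          + (pd 0 (h 1) x) ^ 2 + (pd 1 (h 1) x) ^ 2 + (pd 2 (h 1) x) ^ 2
          + (pd 0 (h 2) x) ^ 2 + (pd 1 (h 2) x) ^ 2 + (pd 2 (h 2) x) ^ 2)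
        + (u 0 x * lap (u 0) x + u 1 x * lap (u 1) x + u 2 x * lap (u 2) x)
        + (h 0 x * lap (h 0) x + h 1 x * lap (h 1) x + h 2 x * lap (h 2) x)
        + lap p x := by
    have e : ∀ j : Fin 3, pd j (fun y => 1 / 2 * ((u 0 y ^ 2 + u 1 y ^ 2 + u 2 y ^ 2)
          + (h 0 y ^ 2 + h 1 y ^ 2 + h 2 y ^ 2)) + p y)
        = fun z => u 0 z * pd j (u 0) z + u 1 z * pd j (u 1) z + u 2 z * pd j (u 2) z
          + (h 0 z * pd j (h 0) z + h 1 z * pd j (h 1) z + h 2 z * pd j (h 2) z)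
          + pd j p z := fun j => funext (G j)
    simp only [lap, Fin.sum_univ_three]
    rw [e 0, e 1, e 2,
      pd_sum3 (by fun_prop) (by fun_prop) ((hp2' 0) x),
      pd_sum3 (by fun_prop) (by fun_prop) ((hp2' 1) x),
      pd_sum3 (by fun_prop) (by fun_prop) ((hp2' 2) x),
      pd_dot3 (hu' 0 x) (hu2' 0 0 x) (hu' 1 x) (hu2' 0 1 x) (hu' 2 x) (hu2' 0 2 x),
      pd_dot3 (hu' 0 x) (hu2' 1 0 x) (hu' 1 x) (hu2' 1 1 x) (hu' 2 x) (hu2' 1 2 x),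
      pd_dot3 (hu' 0 x) (hu2' 2 0 x) (hu' 1 x) (hu2' 2 1 x) (hu' 2 x) (hu2' 2 2 x),
      pd_dot3 (hh' 0 x) (hh2' 0 0 x) (hh' 1 x) (hh2' 0 1 x) (hh' 2 x) (hh2' 0 2 x),
      pd_dot3 (hh' 0 x) (hh2' 1 0 x) (hh' 1 x) (hh2' 1 1 x) (hh' 2 x) (hh2' 1 2 x),
      pd_dot3 (hh' 0 x) (hh2' 2 0 x) (hh' 1 x) (hh2' 2 1 x) (hh' 2 x) (hh2' 2 2 x)]
    ring
  -- final assembly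
  have hm := fun i : Fin 3 => hmom i x
  have hi := fun i : Fin 3 => hind i x
  simp only [Fin.sum_univ_three] at hm hi ⊢
  rw [G 0 x, G 1 x, G 2 x,
    pd_dot3 (hu' 0 x) (hh' 0 x) (hu' 1 x) (hh' 1 x) (hu' 2 x) (hh' 2 x),
    pd_dot3 (hu' 0 x) (hh' 0 x) (hu' 1 x) (hh' 1 x) (hu' 2 x) (hh' 2 x),
    pd_dot3 (hu' 0 x) (hh' 0 x) (hu' 1 x) (hh' 1 x) (hu' 2 x) (hh' 2 x),
    LPhi]
  linear_combination u 0 x * hm 0 + u 1 x * hm 1 + u 2 x * hm 2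
    + h 0 x * hi 0 + h 1 x * hi 1 + h 2 x * hi 2 - Lpx
end

section
/- Let u, h, p be smooth, axially symmetric solutions of the steady non-resistive inviscid MHD equations with u = u_r e_r + u_θ e_θ + u_z e_z and h = h_θ e_θ. Then (h·∇)(u·h) ≡ 0, and consequently the total head pressure Φ = ½(|u|²+|h|²) + p satisfies the Bernoulli law (u·∇)Φ = 0. -/
/-- Cylindrical radius. -/
noncomputable def rr (x : EuclideanSpace ℝ (Fin 3)) : ℝ :=
  Real.sqrt ((x 0) ^ 2 + (x 1) ^ 2)

/-- The Cartesian components of an axially symmetric vector field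
`v_r e_r + v_θ e_θ + v_z e_z`. -/
noncomputable def axiField (v_r v_θ v_z : ℝ → ℝ → ℝ) (i : Fin 3)
    (x : EuclideanSpace ℝ (Fin 3)) : ℝ :=
  v_r (rr x) (x 2) * (![x 0 / rr x, x 1 / rr x, 0] i)
    + v_θ (rr x) (x 2) * (![-(x 1) / rr x, x 0 / rr x, 0] i)
    + v_z (rr x) (x 2) * (![0, 0, 1] i)

section helpers

open EuclideanSpace

lemma MHD.hasFDerivAt_rr (x : EuclideanSpace ℝ (Fin 3)) (hx : 0 < rr x) :
    HasFDerivAt rr ((x 0 / rr x) • (proj 0 : EuclideanSpace ℝ (Fin 3) →L[ℝ] ℝ)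
      + (x 1 / rr x) • (proj 1 : EuclideanSpace ℝ (Fin 3) →L[ℝ] ℝ)) x := by
  have hs : (x 0) ^ 2 + (x 1) ^ 2 ≠ 0 := by
    intro h
    rw [rr, h, Real.sqrt_zero] at hx; exact lt_irrefl 0 hx
  have h0 : HasFDerivAt (fun y : EuclideanSpace ℝ (Fin 3) => y 0)
      (proj 0 : EuclideanSpace ℝ (Fin 3) →L[ℝ] ℝ) x :=
    (proj 0 : EuclideanSpace ℝ (Fin 3) →L[ℝ] ℝ).hasFDerivAt
  have h1 : HasFDerivAt (fun y : EuclideanSpace ℝ (Fin 3) => y 1)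
      (proj 1 : EuclideanSpace ℝ (Fin 3) →L[ℝ] ℝ) x :=
    (proj 1 : EuclideanSpace ℝ (Fin 3) →L[ℝ] ℝ).hasFDerivAt
  have hS := (h0.mul h0).add (h1.mul h1)
  simp only [← pow_two] at hS
  have hsq := (Real.hasDerivAt_sqrt hs).comp_hasFDerivAt x hS
  have hrr : rr = fun y : EuclideanSpace ℝ (Fin 3) => Real.sqrt ((y 0) ^ 2 + (y 1) ^ 2) := rfl
  rw [hrr]
  refine hsq.congr_fderiv ?_
  have hr : Real.sqrt ((x 0) ^ 2 + (x 1) ^ 2) ≠ 0 := by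
    intro h; rw [rr] at hx; rw [h] at hx; exact lt_irrefl 0 hx
  ext y
  simp [rr, ContinuousLinearMap.smul_apply]
  field_simp
  ring

/-- derivative of `V ∘ (rr, z)`. -/
lemma MHD.hasFDerivAt_comp2 (V : ℝ × ℝ → ℝ) (hV : ContDiff ℝ (⊤ : ℕ∞) V)
    (x : EuclideanSpace ℝ (Fin 3)) (hx : 0 < rr x) :
    HasFDerivAt (fun y => V (rr y, y 2))
      ((fderiv ℝ V (rr x, x 2)).comp
        (((x 0 / rr x) • (proj 0 : EuclideanSpace ℝ (Fin 3) →L[ℝ] ℝ)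
          + (x 1 / rr x) • (proj 1 : EuclideanSpace ℝ (Fin 3) →L[ℝ] ℝ)).prod
          (proj 2 : EuclideanSpace ℝ (Fin 3) →L[ℝ] ℝ))) x := by
  have hφ : HasFDerivAt (fun y : EuclideanSpace ℝ (Fin 3) => ((rr y, y 2) : ℝ × ℝ))
      (((x 0 / rr x) • (proj 0 : EuclideanSpace ℝ (Fin 3) →L[ℝ] ℝ)
        + (x 1 / rr x) • (proj 1 : EuclideanSpace ℝ (Fin 3) →L[ℝ] ℝ)).prod
        (proj 2 : EuclideanSpace ℝ (Fin 3) →L[ℝ] ℝ)) x :=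
    (MHD.hasFDerivAt_rr x hx).prodMk (proj 2 : EuclideanSpace ℝ (Fin 3) →L[ℝ] ℝ).hasFDerivAt
  exact ((hV.differentiable (by simp) (rr x, x 2)).hasFDerivAt).comp x hφ

lemma MHD.diffAt_comp2 (V : ℝ × ℝ → ℝ) (hV : ContDiff ℝ (⊤ : ℕ∞) V)
    (x : EuclideanSpace ℝ (Fin 3)) (hx : 0 < rr x) :
    DifferentiableAt ℝ (fun y => V (rr y, y 2)) x :=
  (MHD.hasFDerivAt_comp2 V hV x hx).differentiableAt

lemma MHD.single_apply (i j : Fin 3) :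
    (EuclideanSpace.single i (1:ℝ)) j = if j = i then 1 else 0 :=
  EuclideanSpace.single_apply i 1 j

lemma MHD.pd_comp2 (V : ℝ × ℝ → ℝ) (hV : ContDiff ℝ (⊤ : ℕ∞) V)
    (x : EuclideanSpace ℝ (Fin 3)) (hx : 0 < rr x) (j : Fin 3) :
    pd j (fun y => V (rr y, y 2)) x
      = fderiv ℝ V (rr x, x 2) (![x 0 / rr x, x 1 / rr x, 0] j, ![0,0,1] j) := by
  rw [pd, (MHD.hasFDerivAt_comp2 V hV x hx).fderiv, ContinuousLinearMap.comp_apply]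
  congr 1
  fin_cases j <;>
    simp [ContinuousLinearMap.prod_apply, ContinuousLinearMap.smul_apply, MHD.single_apply,
      Prod.ext_iff]

variable {f g : EuclideanSpace ℝ (Fin 3) → ℝ} {x : EuclideanSpace ℝ (Fin 3)} {j : Fin 3}

lemma MHD.pd_add (hf : DifferentiableAt ℝ f x) (hg : DifferentiableAt ℝ g x) :
    pd j (fun y => f y + g y) x = pd j f x + pd j g x := by
  simp [pd, fderiv_fun_add hf hg]

lemma MHD.pd_mul (hf : DifferentiableAt ℝ f x) (hg : DifferentiableAt ℝ g x) :
    pd j (fun y => f y * g y) x = f x * pd j g x + g x * pd j f x := by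
  simp [pd, fderiv_fun_mul hf hg]

lemma MHD.pd_const_mul (c : ℝ) (hf : DifferentiableAt ℝ f x) :
    pd j (fun y => c * f y) x = c * pd j f x := by
  simp [pd, fderiv_const_mul hf c]

lemma MHD.pd_sq (hf : DifferentiableAt ℝ f x) :
    pd j (fun y => f y ^ 2) x = 2 * f x * pd j f x := by
  have h : (fun y => f y ^ 2) = fun y => f y * f y := by funext y; ring
  rw [h, MHD.pd_mul hf hf]; ring

lemma MHD.diff_coord (k : Fin 3) :
    DifferentiableAt ℝ (fun y : EuclideanSpace ℝ (Fin 3) => y k) x :=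
  (EuclideanSpace.proj k : EuclideanSpace ℝ (Fin 3) →L[ℝ] ℝ).differentiable.differentiableAt

lemma MHD.diff_ratio (hx : 0 < rr x) (k : Fin 3) :
    DifferentiableAt ℝ (fun y : EuclideanSpace ℝ (Fin 3) => y k / rr y) x := by
  simp only [div_eq_mul_inv]
  exact (MHD.diff_coord k).mul ((MHD.hasFDerivAt_rr x hx).differentiableAt.inv (ne_of_gt hx))

lemma MHD.diff_nratio (hx : 0 < rr x) (k : Fin 3) :
    DifferentiableAt ℝ (fun y : EuclideanSpace ℝ (Fin 3) => -(y k) / rr y) x := by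
  simp only [div_eq_mul_inv]
  exact (MHD.diff_coord k).neg.mul
    ((MHD.hasFDerivAt_rr x hx).differentiableAt.inv (ne_of_gt hx))

lemma MHD.diffAt_axi (v_r v_θ v_z : ℝ → ℝ → ℝ)
    (hr : ContDiff ℝ (⊤ : ℕ∞) (fun q : ℝ × ℝ => v_r q.1 q.2))
    (hθ : ContDiff ℝ (⊤ : ℕ∞) (fun q : ℝ × ℝ => v_θ q.1 q.2))
    (hz : ContDiff ℝ (⊤ : ℕ∞) (fun q : ℝ × ℝ => v_z q.1 q.2))
    (hx : 0 < rr x) (i : Fin 3) :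
    DifferentiableAt ℝ (axiField v_r v_θ v_z i) x := by
  have d1 : DifferentiableAt ℝ (fun y => v_r (rr y) (y 2)) x := MHD.diffAt_comp2 _ hr x hx
  have d2 : DifferentiableAt ℝ (fun y => v_θ (rr y) (y 2)) x := MHD.diffAt_comp2 _ hθ x hx
  have d3 : DifferentiableAt ℝ (fun y => v_z (rr y) (y 2)) x := MHD.diffAt_comp2 _ hz x hx
  fin_cases i
  · show DifferentiableAt ℝ (fun y => v_r (rr y) (y 2) * (y 0 / rr y)
      + v_θ (rr y) (y 2) * (-(y 1) / rr y) + v_z (rr y) (y 2) * 0) x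
    exact ((d1.mul (MHD.diff_ratio hx 0)).add
      (d2.mul (MHD.diff_nratio hx 1))).add (d3.mul (differentiableAt_const 0))
  · show DifferentiableAt ℝ (fun y => v_r (rr y) (y 2) * (y 1 / rr y)
      + v_θ (rr y) (y 2) * (y 0 / rr y) + v_z (rr y) (y 2) * 0) x
    exact ((d1.mul (MHD.diff_ratio hx 1)).add
      (d2.mul (MHD.diff_ratio hx 0))).add (d3.mul (differentiableAt_const 0))
  · show DifferentiableAt ℝ (fun y => v_r (rr y) (y 2) * 0
      + v_θ (rr y) (y 2) * 0 + v_z (rr y) (y 2) * 1) x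
    exact ((d1.mul (differentiableAt_const 0)).add
      (d2.mul (differentiableAt_const 0))).add (d3.mul (differentiableAt_const 1))

lemma MHD.continuous_rr : Continuous rr := by
  have h : Continuous fun y : EuclideanSpace ℝ (Fin 3) => (y 0) ^ 2 + (y 1) ^ 2 := by
    have c0 := (EuclideanSpace.proj 0 : EuclideanSpace ℝ (Fin 3) →L[ℝ] ℝ).continuous
    have c1 := (EuclideanSpace.proj 1 : EuclideanSpace ℝ (Fin 3) →L[ℝ] ℝ).continuous
    exact (c0.pow 2).add (c1.pow 2)
  exact Real.continuous_sqrt.comp h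

lemma MHD.rr_sq (y : EuclideanSpace ℝ (Fin 3)) : rr y ^ 2 = (y 0) ^ 2 + (y 1) ^ 2 :=
  Real.sq_sqrt (by positivity)

end helpers
section expand

variable {x : EuclideanSpace ℝ (Fin 3)} {j : Fin 3}

lemma MHD.pd_dot3 (U0 U1 U2 H0 H1 H2 : EuclideanSpace ℝ (Fin 3) → ℝ)
    (dU0 : DifferentiableAt ℝ U0 x) (dU1 : DifferentiableAt ℝ U1 x)
    (dU2 : DifferentiableAt ℝ U2 x) (dH0 : DifferentiableAt ℝ H0 x)
    (dH1 : DifferentiableAt ℝ H1 x) (dH2 : DifferentiableAt ℝ H2 x) :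
    pd j (fun y => U0 y * H0 y + U1 y * H1 y + U2 y * H2 y) x
      = U0 x * pd j H0 x + H0 x * pd j U0 x + (U1 x * pd j H1 x + H1 x * pd j U1 x)
        + (U2 x * pd j H2 x + H2 x * pd j U2 x) := by
  have e1 : pd j (fun y => U0 y * H0 y + U1 y * H1 y + U2 y * H2 y) x
      = pd j (fun y => U0 y * H0 y + U1 y * H1 y) x + pd j (fun y => U2 y * H2 y) x :=
    MHD.pd_add ((dU0.mul dH0).add (dU1.mul dH1)) (dU2.mul dH2)
  have e2 : pd j (fun y => U0 y * H0 y + U1 y * H1 y) x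
      = pd j (fun y => U0 y * H0 y) x + pd j (fun y => U1 y * H1 y) x :=
    MHD.pd_add (dU0.mul dH0) (dU1.mul dH1)
  rw [e1, e2, MHD.pd_mul dU0 dH0, MHD.pd_mul dU1 dH1, MHD.pd_mul dU2 dH2]

lemma MHD.pd_phi (U0 U1 U2 H0 H1 H2 P : EuclideanSpace ℝ (Fin 3) → ℝ)
    (dU0 : DifferentiableAt ℝ U0 x) (dU1 : DifferentiableAt ℝ U1 x)
    (dU2 : DifferentiableAt ℝ U2 x) (dH0 : DifferentiableAt ℝ H0 x)
    (dH1 : DifferentiableAt ℝ H1 x) (dH2 : DifferentiableAt ℝ H2 x)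
    (dP : DifferentiableAt ℝ P x) :
    pd j (fun y => (1 / 2 : ℝ) * ((U0 y ^ 2 + U1 y ^ 2 + U2 y ^ 2)
        + (H0 y ^ 2 + H1 y ^ 2 + H2 y ^ 2)) + P y) x
      = U0 x * pd j U0 x + U1 x * pd j U1 x + U2 x * pd j U2 x
        + H0 x * pd j H0 x + H1 x * pd j H1 x + H2 x * pd j H2 x + pd j P x := by
  have dS : DifferentiableAt ℝ (fun y => (U0 y ^ 2 + U1 y ^ 2 + U2 y ^ 2)
      + (H0 y ^ 2 + H1 y ^ 2 + H2 y ^ 2)) x :=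
    (((dU0.pow 2).add (dU1.pow 2)).add (dU2.pow 2)).add
      (((dH0.pow 2).add (dH1.pow 2)).add (dH2.pow 2))
  have e1 : pd j (fun y => (1 / 2 : ℝ) * ((U0 y ^ 2 + U1 y ^ 2 + U2 y ^ 2)
        + (H0 y ^ 2 + H1 y ^ 2 + H2 y ^ 2)) + P y) x
      = pd j (fun y => (1 / 2 : ℝ) * ((U0 y ^ 2 + U1 y ^ 2 + U2 y ^ 2)
        + (H0 y ^ 2 + H1 y ^ 2 + H2 y ^ 2))) x + pd j P x :=
    MHD.pd_add ((differentiableAt_const _).mul dS) dP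
  have e2 : pd j (fun y => (1 / 2 : ℝ) * ((U0 y ^ 2 + U1 y ^ 2 + U2 y ^ 2)
        + (H0 y ^ 2 + H1 y ^ 2 + H2 y ^ 2))) x
      = (1 / 2 : ℝ) * pd j (fun y => (U0 y ^ 2 + U1 y ^ 2 + U2 y ^ 2)
        + (H0 y ^ 2 + H1 y ^ 2 + H2 y ^ 2)) x :=
    MHD.pd_const_mul _ dS
  have e3 : pd j (fun y => (U0 y ^ 2 + U1 y ^ 2 + U2 y ^ 2)
        + (H0 y ^ 2 + H1 y ^ 2 + H2 y ^ 2)) x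
      = pd j (fun y => U0 y ^ 2 + U1 y ^ 2 + U2 y ^ 2) x
        + pd j (fun y => H0 y ^ 2 + H1 y ^ 2 + H2 y ^ 2) x :=
    MHD.pd_add (((dU0.pow 2).add (dU1.pow 2)).add (dU2.pow 2))
      (((dH0.pow 2).add (dH1.pow 2)).add (dH2.pow 2))
  have e4 : pd j (fun y => U0 y ^ 2 + U1 y ^ 2 + U2 y ^ 2) x
      = pd j (fun y => U0 y ^ 2 + U1 y ^ 2) x + pd j (fun y => U2 y ^ 2) x :=
    MHD.pd_add ((dU0.pow 2).add (dU1.pow 2)) (dU2.pow 2)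
  have e5 : pd j (fun y => U0 y ^ 2 + U1 y ^ 2) x
      = pd j (fun y => U0 y ^ 2) x + pd j (fun y => U1 y ^ 2) x :=
    MHD.pd_add (dU0.pow 2) (dU1.pow 2)
  have e6 : pd j (fun y => H0 y ^ 2 + H1 y ^ 2 + H2 y ^ 2) x
      = pd j (fun y => H0 y ^ 2 + H1 y ^ 2) x + pd j (fun y => H2 y ^ 2) x :=
    MHD.pd_add ((dH0.pow 2).add (dH1.pow 2)) (dH2.pow 2)
  have e7 : pd j (fun y => H0 y ^ 2 + H1 y ^ 2) x
      = pd j (fun y => H0 y ^ 2) x + pd j (fun y => H1 y ^ 2) x :=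
    MHD.pd_add (dH0.pow 2) (dH1.pow 2)
  rw [e1, e2, e3, e4, e5, e6, e7, MHD.pd_sq dU0, MHD.pd_sq dU1, MHD.pd_sq dU2,
    MHD.pd_sq dH0, MHD.pd_sq dH1, MHD.pd_sq dH2]
  ring

end expand
/-- For an axially symmetric smooth solution of the steady non-resistive inviscid MHD
equations with `u = u_r e_r + u_θ e_θ + u_z e_z` and `h = h_θ e_θ`, one has
`(h·∇)(u·h) ≡ 0` and the Bernoulli law `(u·∇)Φ = 0` for
`Φ = ½(|u|² + |h|²) + p`. -/
theorem stmt18 (u_r u_θ u_z h_θ p : ℝ → ℝ → ℝ)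
    (h1 : ContDiff ℝ (⊤ : ℕ∞) (fun q : ℝ × ℝ => u_r q.1 q.2))
    (h2 : ContDiff ℝ (⊤ : ℕ∞) (fun q : ℝ × ℝ => u_θ q.1 q.2))
    (h3 : ContDiff ℝ (⊤ : ℕ∞) (fun q : ℝ × ℝ => u_z q.1 q.2))
    (h4 : ContDiff ℝ (⊤ : ℕ∞) (fun q : ℝ × ℝ => h_θ q.1 q.2))
    (h5 : ContDiff ℝ (⊤ : ℕ∞) (fun q : ℝ × ℝ => p q.1 q.2))
    (hmom : ∀ (i : Fin 3) (x : EuclideanSpace ℝ (Fin 3)), 0 < rr x →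
      (∑ j, axiField u_r u_θ u_z j x * pd j (axiField u_r u_θ u_z i) x)
          + pd i (fun y => p (rr y) (y 2)) x
        = ∑ j, axiField (fun _ _ => 0) h_θ (fun _ _ => 0) j x
            * pd j (axiField (fun _ _ => 0) h_θ (fun _ _ => 0) i) x)
    (hind : ∀ (i : Fin 3) (x : EuclideanSpace ℝ (Fin 3)), 0 < rr x →
      (∑ j, axiField u_r u_θ u_z j x
            * pd j (axiField (fun _ _ => 0) h_θ (fun _ _ => 0) i) x)
          - (∑ j, axiField (fun _ _ => 0) h_θ (fun _ _ => 0) j x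
            * pd j (axiField u_r u_θ u_z i) x) = 0)
    (hdivu : ∀ x : EuclideanSpace ℝ (Fin 3), 0 < rr x →
      ∑ i, pd i (axiField u_r u_θ u_z i) x = 0)
    (hdivh : ∀ x : EuclideanSpace ℝ (Fin 3), 0 < rr x →
      ∑ i, pd i (axiField (fun _ _ => 0) h_θ (fun _ _ => 0) i) x = 0) :
    ∀ x : EuclideanSpace ℝ (Fin 3), 0 < rr x →
      (∑ j, axiField (fun _ _ => 0) h_θ (fun _ _ => 0) j x
          * pd j (fun y => ∑ i, axiField u_r u_θ u_z i y
              * axiField (fun _ _ => 0) h_θ (fun _ _ => 0) i y) x) = 0 ∧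
      (∑ j, axiField u_r u_θ u_z j x
          * pd j (fun y => (1 / 2) * ((∑ i, (axiField u_r u_θ u_z i y) ^ 2)
              + ∑ i, (axiField (fun _ _ => 0) h_θ (fun _ _ => 0) i y) ^ 2)
              + p (rr y) (y 2)) x) = 0 := by
  intro x hx
  set U := axiField u_r u_θ u_z with hU
  set H := axiField (fun _ _ => 0) h_θ (fun _ _ => 0) with hH
  have dU : ∀ i, DifferentiableAt ℝ (U i) x := fun i => by
    rw [hU]; exact MHD.diffAt_axi _ _ _ h1 h2 h3 hx i
  have dH : ∀ i, DifferentiableAt ℝ (H i) x := fun i => by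
    rw [hH]; exact MHD.diffAt_axi _ _ _ contDiff_const h4 contDiff_const hx i
  have dP : DifferentiableAt ℝ (fun y => p (rr y) (y 2)) x := MHD.diffAt_comp2 _ h5 x hx
  have hGc : ContDiff ℝ (⊤ : ℕ∞) (fun q : ℝ × ℝ => u_θ q.1 q.2 * h_θ q.1 q.2) := h2.mul h4
  -- the dot product u·h equals u_θ h_θ near x
  have hEq : (fun y => ∑ i, U i y * H i y)
      =ᶠ[nhds x] (fun y => u_θ (rr y) (y 2) * h_θ (rr y) (y 2)) := by
    have hmem : {y : EuclideanSpace ℝ (Fin 3) | 0 < rr y} ∈ nhds x :=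
      (isOpen_lt continuous_const MHD.continuous_rr).mem_nhds hx
    filter_upwards [hmem] with y hy
    have hyne : rr y ≠ 0 := ne_of_gt hy
    have hsq := MHD.rr_sq y
    simp only [hU, hH, Fin.sum_univ_three, axiField, Matrix.cons_val_zero,
      Matrix.cons_val_one, Matrix.head_cons, Matrix.cons_val_two, Matrix.tail_cons]
    field_simp
    linear_combination (-(u_θ (rr y) (y 2) * h_θ (rr y) (y 2))) * hsq
  have p1 : ∀ j, pd j (fun y => ∑ i, U i y * H i y) x
      = fderiv ℝ (fun q : ℝ × ℝ => u_θ q.1 q.2 * h_θ q.1 q.2) (rr x, x 2)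
          (![x 0 / rr x, x 1 / rr x, 0] j, ![0, 0, 1] j) := by
    intro j
    have h' : pd j (fun y => ∑ i, U i y * H i y) x
        = pd j (fun y => u_θ (rr y) (y 2) * h_θ (rr y) (y 2)) x := by
      simp only [pd]
      rw [hEq.fderiv_eq]
    rw [h']
    exact MHD.pd_comp2 _ hGc x hx j
  have l1 : ∀ c : ℝ, fderiv ℝ (fun q : ℝ × ℝ => u_θ q.1 q.2 * h_θ q.1 q.2) (rr x, x 2) (c, (0:ℝ))
      = c * fderiv ℝ (fun q : ℝ × ℝ => u_θ q.1 q.2 * h_θ q.1 q.2) (rr x, x 2) (1, (0:ℝ)) := by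
    intro c
    have hc : ((c, (0:ℝ)) : ℝ × ℝ) = c • ((1:ℝ), (0:ℝ)) := by simp
    rw [hc, ContinuousLinearMap.map_smul, smul_eq_mul]
  have part1 : (∑ j, H j x * pd j (fun y => ∑ i, U i y * H i y) x) = 0 := by
    rw [Fin.sum_univ_three, p1 0, p1 1, p1 2]
    simp only [Matrix.cons_val_zero, Matrix.cons_val_one, Matrix.head_cons,
      Matrix.cons_val_two, Matrix.tail_cons]
    rw [l1 (x 0 / rr x), l1 (x 1 / rr x)]
    simp only [hH, axiField, Matrix.cons_val_zero, Matrix.cons_val_one, Matrix.head_cons,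
      Matrix.cons_val_two, Matrix.tail_cons]
    ring
  refine ⟨part1, ?_⟩
  -- expansion of pd of the dot product
  have ed : ∀ j, pd j (fun y => ∑ i, U i y * H i y) x
      = U 0 x * pd j (H 0) x + H 0 x * pd j (U 0) x
        + (U 1 x * pd j (H 1) x + H 1 x * pd j (U 1) x)
        + (U 2 x * pd j (H 2) x + H 2 x * pd j (U 2) x) := by
    intro j
    have h' : pd j (fun y => ∑ i, U i y * H i y) x
        = pd j (fun y => U 0 y * H 0 y + U 1 y * H 1 y + U 2 y * H 2 y) x := by
      simp only [Fin.sum_univ_three]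
    rw [h']
    exact MHD.pd_dot3 _ _ _ _ _ _ (dU 0) (dU 1) (dU 2) (dH 0) (dH 1) (dH 2)
  -- expansion of pd of the Bernoulli function
  have eΦ : ∀ j, pd j (fun y => (1 / 2) * ((∑ i, (U i y) ^ 2) + ∑ i, (H i y) ^ 2)
        + p (rr y) (y 2)) x
      = U 0 x * pd j (U 0) x + U 1 x * pd j (U 1) x + U 2 x * pd j (U 2) x
        + H 0 x * pd j (H 0) x + H 1 x * pd j (H 1) x + H 2 x * pd j (H 2) x
        + pd j (fun y => p (rr y) (y 2)) x := by
    intro j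
    have h' : pd j (fun y => (1 / 2) * ((∑ i, (U i y) ^ 2) + ∑ i, (H i y) ^ 2)
          + p (rr y) (y 2)) x
        = pd j (fun y => (1 / 2 : ℝ) * ((U 0 y ^ 2 + U 1 y ^ 2 + U 2 y ^ 2)
          + (H 0 y ^ 2 + H 1 y ^ 2 + H 2 y ^ 2)) + p (rr y) (y 2)) x := by
      simp only [Fin.sum_univ_three]
    rw [h']
    exact MHD.pd_phi _ _ _ _ _ _ _ (dU 0) (dU 1) (dU 2) (dH 0) (dH 1) (dH 2) dP
  have key := part1
  simp only [ed] at key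
  rw [Fin.sum_univ_three] at key
  have hm0 := hmom 0 x hx
  have hm1 := hmom 1 x hx
  have hm2 := hmom 2 x hx
  have hd0 := hind 0 x hx
  have hd1 := hind 1 x hx
  have hd2 := hind 2 x hx
  simp only [Fin.sum_univ_three] at hm0 hm1 hm2 hd0 hd1 hd2
  simp only [eΦ]
  rw [Fin.sum_univ_three]
  linear_combination U 0 x * hm0 + U 1 x * hm1 + U 2 x * hm2
    + H 0 x * hd0 + H 1 x * hd1 + H 2 x * hd2 + key
end
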